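/- For any f ∈ T^{p,q}_{α,β}(γ) and g ∈ T^{p',q'}_{α,β}(γ) with 1 < p, q < ∞ and 1/p + 1/p' = 1/q + 1/q' = 1: ∬_{R^{n+1}_+} |f(y,t)||g(y,t)| dγ(y) dt/t ≤ ∫_{R^n} S_{q,α,β}f(x) · S_{q',α,β}g(x) dγ(x) ≤ ‖S_{q,α,β}f‖_{L^p(γ)} ‖S_{q',α,β}g‖_{L^{p'}(γ)}. -/

import Mathlib

open MeasureTheory Metric Set ENNReal

noncomputable def mCut {n : ℕ} (x : EuclideanSpace ℝ (Fin n)) : ℝ :=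
  if ‖x‖ ≤ 1 then 1 else 1 / ‖x‖

noncomputable def gaussM (n : ℕ) : Measure (EuclideanSpace ℝ (Fin n)) :=
  volume.withDensity fun y => ENNReal.ofReal (Real.exp (-‖y‖ ^ 2))

noncomputable def dtt : Measure ℝ :=
  (volume.restrict (Set.Ioi (0 : ℝ))).withDensity fun t => ENNReal.ofReal (1 / t)

noncomputable def tentMeasure (n : ℕ) : Measure (EuclideanSpace ℝ (Fin n) × ℝ) :=
  (gaussM n).prod dtt

def gaussCone {n : ℕ} (α β : ℝ) (x : EuclideanSpace ℝ (Fin n)) :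
    Set (EuclideanSpace ℝ (Fin n) × ℝ) :=
  {p | 0 < p.2 ∧ dist p.1 x < min (α * p.2) (β * mCut p.1)}

def gaussTent {n : ℕ} (α β : ℝ) (B : Set (EuclideanSpace ℝ (Fin n))) :
    Set (EuclideanSpace ℝ (Fin n) × ℝ) :=
  {p | 0 < p.2 ∧ min (α * p.2) (β * mCut p.1) ≤ Metric.infDist p.1 Bᶜ}

noncomputable def areaS {n : ℕ} (q α β : ℝ) (f : EuclideanSpace ℝ (Fin n) × ℝ → ℝ)
    (x : EuclideanSpace ℝ (Fin n)) : ℝ≥0∞ :=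
  (∫⁻ p in gaussCone α β x,
      ENNReal.ofReal (|f p| ^ q) /
        gaussM n (Metric.ball p.1 (min (α * p.2) (β * mCut p.1))) ∂ tentMeasure n) ^ (1 / q)

noncomputable def areaSInf {n : ℕ} (α β : ℝ) (f : EuclideanSpace ℝ (Fin n) × ℝ → ℝ)
    (x : EuclideanSpace ℝ (Fin n)) : ℝ≥0∞ :=
  ⨆ p ∈ gaussCone α β x, ENNReal.ofReal |f p|

/-! ### Auxiliary material -/

section Aux

variable {n : ℕ}

instance : SFinite (gaussM n) := by unfold gaussM; infer_instance

instance : SFinite dtt := by unfold dtt; infer_instance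

instance : SFinite (tentMeasure n) := by unfold tentMeasure; infer_instance

/-- The truncation radius. -/
noncomputable def radAux {n : ℕ} (α β : ℝ) (p : EuclideanSpace ℝ (Fin n) × ℝ) : ℝ :=
  min (α * p.2) (β * mCut p.1)

/-- The Gaussian measure of the associated ball. -/
noncomputable def GAux (n : ℕ) (α β : ℝ) (p : EuclideanSpace ℝ (Fin n) × ℝ) : ℝ≥0∞ :=
  gaussM n (Metric.ball p.1 (radAux α β p))

lemma mCut_pos (x : EuclideanSpace ℝ (Fin n)) : 0 < mCut x := by
  unfold mCut
  split
  · norm_num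
  · rename_i h
    have : (1 : ℝ) < ‖x‖ := lt_of_not_ge h
    positivity

lemma measurable_mCut : Measurable (mCut (n := n)) := by
  unfold mCut
  exact Measurable.ite (measurableSet_le measurable_norm measurable_const)
    measurable_const (measurable_const.div measurable_norm)

lemma measurable_radAux (α β : ℝ) : Measurable (radAux (n := n) α β) :=
  (measurable_const.mul measurable_snd).min
    (measurable_const.mul (measurable_mCut.comp measurable_fst))

lemma radAux_pos {α β : ℝ} (hα : 0 < α) (hβ : 0 < β)
    {p : EuclideanSpace ℝ (Fin n) × ℝ} (ht : 0 < p.2) : 0 < radAux α β p :=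
  lt_min (mul_pos hα ht) (mul_pos hβ (mCut_pos _))

lemma gaussM_le_volume (s : Set (EuclideanSpace ℝ (Fin n))) (hs : MeasurableSet s) :
    gaussM n s ≤ volume s := by
  rw [gaussM, withDensity_apply _ hs]
  calc ∫⁻ y in s, ENNReal.ofReal (Real.exp (-‖y‖ ^ 2)) ∂volume
      ≤ ∫⁻ _ in s, 1 ∂volume := by
        refine setLIntegral_mono measurable_const fun y _ => ?_
        have : Real.exp (-‖y‖ ^ 2) ≤ 1 := Real.exp_le_one_iff.2 (by nlinarith [sq_nonneg ‖y‖])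
        simp [ENNReal.ofReal_le_one, this]
    _ = volume s := by simp

lemma GAux_lt_top {α β : ℝ} (p : EuclideanSpace ℝ (Fin n) × ℝ) : GAux n α β p < ⊤ :=
  lt_of_le_of_lt (gaussM_le_volume _ measurableSet_ball) measure_ball_lt_top

lemma gaussM_ball_pos {y : EuclideanSpace ℝ (Fin n)} {r : ℝ} (hr : 0 < r) :
    0 < gaussM n (Metric.ball y r) := by
  rw [gaussM, withDensity_apply _ measurableSet_ball]
  have hlb : ∀ z ∈ Metric.ball y r,
      ENNReal.ofReal (Real.exp (-(‖y‖ + r) ^ 2)) ≤ ENNReal.ofReal (Real.exp (-‖z‖ ^ 2)) := by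
    intro z hz
    apply ENNReal.ofReal_le_ofReal
    apply Real.exp_le_exp.2
    have hzy : ‖z‖ ≤ ‖y‖ + r := by
      have : dist z y < r := mem_ball.1 hz
      have := norm_le_norm_add_norm_sub' z y
      have hd : ‖z - y‖ < r := by rwa [← dist_eq_norm]
      nlinarith [norm_nonneg y, norm_nonneg (z - y), norm_sub_norm_le z y]
    have h0z : 0 ≤ ‖z‖ := norm_nonneg z
    nlinarith
  calc (0 : ℝ≥0∞) < ENNReal.ofReal (Real.exp (-(‖y‖ + r) ^ 2)) * volume (Metric.ball y r) := by
        apply ENNReal.mul_pos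
        · simp [Real.exp_pos]
        · exact (measure_ball_pos volume y hr).ne'
    _ = ∫⁻ _ in Metric.ball y r, ENNReal.ofReal (Real.exp (-(‖y‖ + r) ^ 2)) ∂volume := by
        simp [mul_comm]
    _ ≤ ∫⁻ z in Metric.ball y r, ENNReal.ofReal (Real.exp (-‖z‖ ^ 2)) ∂volume :=
        setLIntegral_mono (by fun_prop) hlb

lemma GAux_pos {α β : ℝ} (hα : 0 < α) (hβ : 0 < β)
    {p : EuclideanSpace ℝ (Fin n) × ℝ} (ht : 0 < p.2) : 0 < GAux n α β p :=
  gaussM_ball_pos (radAux_pos hα hβ ht)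

lemma measurable_GAux (α β : ℝ) : Measurable (GAux n α β) := by
  have hS : MeasurableSet {w : (EuclideanSpace ℝ (Fin n) × ℝ) × EuclideanSpace ℝ (Fin n) |
      dist w.2 w.1.1 < radAux α β w.1} :=
    measurableSet_lt (measurable_snd.dist measurable_fst.fst)
      ((measurable_radAux α β).comp measurable_fst)
  have h2 : (fun p : EuclideanSpace ℝ (Fin n) × ℝ => gaussM n (Prod.mk p ⁻¹'
      {w : (EuclideanSpace ℝ (Fin n) × ℝ) × EuclideanSpace ℝ (Fin n) |
        dist w.2 w.1.1 < radAux α β w.1})) = GAux n α β := by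
    funext p
    rfl
  rw [← h2]
  exact measurable_measure_prodMk_left hS

lemma measurableSet_gaussCone (α β : ℝ) (x : EuclideanSpace ℝ (Fin n)) :
    MeasurableSet (gaussCone α β x) := by
  have h1 : MeasurableSet {p : EuclideanSpace ℝ (Fin n) × ℝ | 0 < p.2} :=
    measurableSet_lt measurable_const measurable_snd
  have h2 : MeasurableSet {p : EuclideanSpace ℝ (Fin n) × ℝ |
      dist p.1 x < radAux α β p} :=
    measurableSet_lt (measurable_fst.dist measurable_const) (measurable_radAux α β)
  exact h1.inter h2

lemma measurableSet_coneProd (α β : ℝ) :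
    MeasurableSet {w : EuclideanSpace ℝ (Fin n) × (EuclideanSpace ℝ (Fin n) × ℝ) |
      w.2 ∈ gaussCone α β w.1} := by
  have h1 : MeasurableSet {w : EuclideanSpace ℝ (Fin n) × (EuclideanSpace ℝ (Fin n) × ℝ) |
      0 < w.2.2} := measurableSet_lt measurable_const measurable_snd.snd
  have h2 : MeasurableSet {w : EuclideanSpace ℝ (Fin n) × (EuclideanSpace ℝ (Fin n) × ℝ) |
      dist w.2.1 w.1 < radAux α β w.2} :=
    measurableSet_lt (measurable_snd.fst.dist measurable_fst)
      ((measurable_radAux α β).comp measurable_snd)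
  exact h1.inter h2

lemma ae_pos_snd : ∀ᵐ p ∂(tentMeasure n), 0 < p.2 := by
  rw [ae_iff]
  have hsub : {p : EuclideanSpace ℝ (Fin n) × ℝ | ¬ 0 < p.2} ⊆
      (Set.univ : Set (EuclideanSpace ℝ (Fin n))) ×ˢ Set.Iic (0 : ℝ) := by
    intro p hp
    simp only [Set.mem_setOf_eq, not_lt] at hp
    exact ⟨Set.mem_univ _, hp⟩
  refine measure_mono_null hsub ?_
  rw [tentMeasure, Measure.prod_prod]
  have : dtt (Set.Iic (0 : ℝ)) = 0 := by
    rw [dtt, withDensity_apply _ measurableSet_Iic, Measure.restrict_restrict measurableSet_Iic]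
    have : Set.Iic (0 : ℝ) ∩ Set.Ioi 0 = ∅ := by
      ext t; simp only [Set.mem_inter_iff, Set.mem_Iic, Set.mem_Ioi, Set.mem_empty_iff_false,
        iff_false, not_and, not_lt]
      exact fun h => h
    rw [this]
    simp
  rw [this, mul_zero]

/-- Per-point Hölder bound inside the cone. -/
lemma cone_holder {α β q q' : ℝ} (hα : 0 < α) (hβ : 0 < β) (hq : 1 < q)
    (hqq : 1 / q + 1 / q' = 1) (f g : EuclideanSpace ℝ (Fin n) × ℝ → ℝ)
    (hf : Measurable f) (hg : Measurable g) (x : EuclideanSpace ℝ (Fin n)) :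
    ∫⁻ p in gaussCone α β x,
        (ENNReal.ofReal |f p| * ENNReal.ofReal |g p|) / GAux n α β p ∂(tentMeasure n)
      ≤ areaS q α β f x * areaS q' α β g x := by
  have hconj : q.HolderConjugate q' := Real.holderConjugate_iff.2 ⟨hq, by simpa [one_div] using hqq⟩
  have hq0 : (0 : ℝ) ≤ q := le_of_lt hconj.pos
  have hq'0 : (0 : ℝ) ≤ q' := le_of_lt hconj.symm.pos
  have hqne : q ≠ 0 := hconj.pos.ne'
  have hq'ne : q' ≠ 0 := hconj.symm.pos.ne'
  set μ := tentMeasure n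
  set C := gaussCone α β x with hC
  have hCm : MeasurableSet C := measurableSet_gaussCone α β x
  set φ : EuclideanSpace ℝ (Fin n) × ℝ → ℝ≥0∞ :=
    fun p => ENNReal.ofReal |f p| * (GAux n α β p) ^ (-(1 / q)) with hφ
  set ψ : EuclideanSpace ℝ (Fin n) × ℝ → ℝ≥0∞ :=
    fun p => ENNReal.ofReal |g p| * (GAux n α β p) ^ (-(1 / q')) with hψ
  have hφm : Measurable φ :=
    (measurable_ofReal.comp hf.abs).mul ((measurable_GAux α β).pow measurable_const)
  have hψm : Measurable ψ :=
    (measurable_ofReal.comp hg.abs).mul ((measurable_GAux α β).pow measurable_const)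
  have key : ∀ p ∈ C, GAux n α β p ≠ 0 ∧ GAux n α β p ≠ ⊤ := by
    intro p hp
    exact ⟨(GAux_pos hα hβ hp.1).ne', (GAux_lt_top p).ne⟩
  -- step 1: rewrite the integrand as φ * ψ
  have step1 : ∫⁻ p in C, (ENNReal.ofReal |f p| * ENNReal.ofReal |g p|) / GAux n α β p ∂μ
      = ∫⁻ p in C, (φ * ψ) p ∂μ := by
    refine setLIntegral_congr_fun hCm (fun p hp => ?_)
    obtain ⟨hG0, hGt⟩ := key p hp
    simp only [Pi.mul_apply, hφ, hψ]
    rw [mul_mul_mul_comm, ← ENNReal.rpow_add _ _ hG0 hGt]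
    have : -(1 / q) + -(1 / q') = -1 := by rw [← neg_add]; rw [hqq]
    rw [this, ENNReal.rpow_neg_one, div_eq_mul_inv]
  -- step 2: Hölder
  have step2 := ENNReal.lintegral_mul_le_Lp_mul_Lq (μ.restrict C) hconj
    hφm.aemeasurable hψm.aemeasurable
  -- step 3: identify the factors with areaS
  have idf : ∫⁻ p in C, φ p ^ q ∂μ = ∫⁻ p in C,
      ENNReal.ofReal (|f p| ^ q) /
        gaussM n (Metric.ball p.1 (min (α * p.2) (β * mCut p.1))) ∂μ := by
    refine setLIntegral_congr_fun hCm (fun p hp => ?_)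
    obtain ⟨hG0, hGt⟩ := key p hp
    simp only [hφ]
    rw [ENNReal.mul_rpow_of_nonneg _ _ hq0, ← ENNReal.rpow_mul,
      ENNReal.ofReal_rpow_of_nonneg (abs_nonneg _) hq0]
    have : -(1 / q) * q = -1 := by field_simp
    rw [this, ENNReal.rpow_neg_one, div_eq_mul_inv]
    rfl
  have idg : ∫⁻ p in C, ψ p ^ q' ∂μ = ∫⁻ p in C,
      ENNReal.ofReal (|g p| ^ q') /
        gaussM n (Metric.ball p.1 (min (α * p.2) (β * mCut p.1))) ∂μ := by
    refine setLIntegral_congr_fun hCm (fun p hp => ?_)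
    obtain ⟨hG0, hGt⟩ := key p hp
    simp only [hψ]
    rw [ENNReal.mul_rpow_of_nonneg _ _ hq'0, ← ENNReal.rpow_mul,
      ENNReal.ofReal_rpow_of_nonneg (abs_nonneg _) hq'0]
    have : -(1 / q') * q' = -1 := by field_simp
    rw [this, ENNReal.rpow_neg_one, div_eq_mul_inv]
    rfl
  calc ∫⁻ p in C, (ENNReal.ofReal |f p| * ENNReal.ofReal |g p|) / GAux n α β p ∂μ
      = ∫⁻ p in C, (φ * ψ) p ∂μ := step1
    _ ≤ (∫⁻ p in C, φ p ^ q ∂μ) ^ (1 / q) * (∫⁻ p in C, ψ p ^ q' ∂μ) ^ (1 / q') := step2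
    _ = areaS q α β f x * areaS q' α β g x := by
        rw [idf, idg]; rfl

end Aux

theorem stmt18 {n : ℕ} (p q p' q' α β : ℝ) (hp : 1 < p) (hq : 1 < q)
    (hpp : 1 / p + 1 / p' = 1) (hqq : 1 / q + 1 / q' = 1) (hα : 0 < α) (hβ : 0 < β)
    (f g : EuclideanSpace ℝ (Fin n) × ℝ → ℝ) (hf : Measurable f) (hg : Measurable g) :
    (∫⁻ pt, ENNReal.ofReal (|f pt| * |g pt|) ∂ tentMeasure n)
        ≤ ∫⁻ x, areaS q α β f x * areaS q' α β g x ∂ gaussM n ∧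
      ∫⁻ x, areaS q α β f x * areaS q' α β g x ∂ gaussM n
        ≤ (∫⁻ x, areaS q α β f x ^ p ∂ gaussM n) ^ (1 / p) *
          (∫⁻ x, areaS q' α β g x ^ p' ∂ gaussM n) ^ (1 / p') := by
  have hpconj : p.HolderConjugate p' := Real.holderConjugate_iff.2 ⟨hp, by simpa [one_div] using hpp⟩
  set μ := tentMeasure n with hμ
  set γ := gaussM n with hγ
  set F : EuclideanSpace ℝ (Fin n) × ℝ → ℝ≥0∞ :=
    fun pt => ENNReal.ofReal |f pt| * ENNReal.ofReal |g pt| with hF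
  have hFm : Measurable F := (measurable_ofReal.comp hf.abs).mul (measurable_ofReal.comp hg.abs)
  have hGm : Measurable (GAux n α β) := measurable_GAux α β
  -- the doubly-indexed integrand
  set H : EuclideanSpace ℝ (Fin n) → (EuclideanSpace ℝ (Fin n) × ℝ) → ℝ≥0∞ :=
    fun x pt => Set.indicator (gaussCone α β x) (fun pt => F pt / GAux n α β pt) pt with hH
  have hHm : Measurable (Function.uncurry H) := by
    have : Function.uncurry H = Set.indicator
        {w : EuclideanSpace ℝ (Fin n) × (EuclideanSpace ℝ (Fin n) × ℝ) |
          w.2 ∈ gaussCone α β w.1} (fun w => F w.2 / GAux n α β w.2) := by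
      rfl
    rw [this]
    exact ((hFm.comp measurable_snd).div (hGm.comp measurable_snd)).indicator
      (measurableSet_coneProd α β)
  -- areaS measurability
  have hAreaMeas : ∀ (r : ℝ) (h : EuclideanSpace ℝ (Fin n) × ℝ → ℝ), Measurable h →
      Measurable (areaS (n := n) r α β h) := by
    intro r h hh
    have hint : Measurable (fun w : EuclideanSpace ℝ (Fin n) × (EuclideanSpace ℝ (Fin n) × ℝ) =>
        Set.indicator {w : EuclideanSpace ℝ (Fin n) × (EuclideanSpace ℝ (Fin n) × ℝ) |
          w.2 ∈ gaussCone α β w.1}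
          (fun w => ENNReal.ofReal (|h w.2| ^ r) / GAux n α β w.2) w) := by
      refine Measurable.indicator ?_ (measurableSet_coneProd α β)
      exact ((measurable_ofReal.comp ((hh.comp measurable_snd).abs.pow
        measurable_const)).div (hGm.comp measurable_snd))
    have hmain : Measurable (fun x => ∫⁻ pt in gaussCone α β x,
        ENNReal.ofReal (|h pt| ^ r) /
          gaussM n (Metric.ball pt.1 (min (α * pt.2) (β * mCut pt.1))) ∂μ) := by
      have := Measurable.lintegral_prod_right (ν := μ)
        (f := fun x pt => Set.indicator {w : EuclideanSpace ℝ (Fin n) ×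
          (EuclideanSpace ℝ (Fin n) × ℝ) | w.2 ∈ gaussCone α β w.1}
          (fun w => ENNReal.ofReal (|h w.2| ^ r) / GAux n α β w.2) (x, pt)) hint
      convert this using 2 with x
      rw [← lintegral_indicator (measurableSet_gaussCone α β x) _]
      congr 1 with pt
    exact hmain.pow measurable_const
  have hSf : Measurable (areaS (n := n) q α β f) := hAreaMeas q f hf
  have hSg : Measurable (areaS (n := n) q' α β g) := hAreaMeas q' g hg
  constructor
  · -- first inequality
    have eq1 : (∫⁻ pt, ENNReal.ofReal (|f pt| * |g pt|) ∂μ)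
        = ∫⁻ pt, ∫⁻ x, H x pt ∂γ ∂μ := by
      have h1 : ∀ᵐ pt ∂μ, ENNReal.ofReal (|f pt| * |g pt|) = ∫⁻ x, H x pt ∂γ := by
        filter_upwards [ae_pos_snd (n := n)] with pt hpt
        have hball : {x : EuclideanSpace ℝ (Fin n) | pt ∈ gaussCone α β x}
            = Metric.ball pt.1 (radAux α β pt) := by
          ext x
          simp only [Set.mem_setOf_eq, gaussCone, Metric.mem_ball, radAux]
          constructor
          · rintro ⟨-, h⟩; rwa [dist_comm] at h
          · intro h; exact ⟨hpt, by rwa [dist_comm] at h⟩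
        have : ∫⁻ x, H x pt ∂γ = (F pt / GAux n α β pt) * GAux n α β pt := by
          have : (fun x => H x pt) = Set.indicator
              (Metric.ball pt.1 (radAux α β pt)) (fun _ => F pt / GAux n α β pt) := by
            ext x
            simp only [hH, Set.indicator_apply]
            rw [← hball]
            rfl
          rw [this, lintegral_indicator_const measurableSet_ball]
          rfl
        rw [this, ENNReal.div_mul_cancel (GAux_pos hα hβ hpt).ne' (GAux_lt_top pt).ne]
        rw [hF, ENNReal.ofReal_mul (abs_nonneg _)]
      exact lintegral_congr_ae h1
    have eq2 : ∫⁻ pt, ∫⁻ x, H x pt ∂γ ∂μ = ∫⁻ x, ∫⁻ pt, H x pt ∂μ ∂γ := by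
      exact (lintegral_lintegral_swap (f := H) hHm.aemeasurable).symm
    rw [eq1, eq2]
    refine lintegral_mono fun x => ?_
    have : ∫⁻ pt, H x pt ∂μ = ∫⁻ pt in gaussCone α β x, F pt / GAux n α β pt ∂μ := by
      rw [← lintegral_indicator (measurableSet_gaussCone α β x) _]
    rw [this]
    exact cone_holder hα hβ hq hqq f g hf hg x
  · -- second inequality: Hölder on the Gaussian measure
    have := ENNReal.lintegral_mul_le_Lp_mul_Lq γ hpconj
      hSf.aemeasurable hSg.aemeasurable
    simpa using this
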